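/- arXiv:1207.4219 — 8 statements merged into one kernel-verified Lean document; each statement's English description precedes it below -/
import Mathlib

section
/- For any two vertices i and j of the infinite distance graph D(1,t) with t ≥ 2, writing |i - j| = q·t + r where 0 ≤ r < t, the graph distance satisfies d(i,j) = min(q + r, q + 1 + t - r). -/
/-!
A walk from `i` to `j` in `D(1,t)` consists of some steps `±1` and some steps `±t`, so its length
is at least `|a| + |y|` for some decomposition `j - i = a + y * t`, and every such decomposition
is realised by a walk of that length. Hence `d(i,j)` is the least `|a| + |y|`; for
`j - i = q * t + r` this minimum is attained at `y = q` or at `y = q + 1`.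
-/

/-- The infinite distance graph on `ℤ` with distance set `D`: distinct integers
`i, j` are adjacent iff `|i - j| ∈ D`. -/
def distGraph (D : Set ℤ) : SimpleGraph ℤ where
  Adj i j := i ≠ j ∧ |i - j| ∈ D
  symm := by
    constructor
    intro i j h
    exact ⟨h.1.symm, by rw [abs_sub_comm]; exact h.2⟩
  loopless := by
    constructor
    intro i h
    exact h.1 rfl

namespace SimpleGraph

variable {α : Type*} [AddCommGroup α] {G : SimpleGraph α} {s : α}

theorem edist_add_nsmul_le (hs : ∀ x, G.Adj x (x + s)) (x : α) (n : ℕ) :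
    G.edist x (x + n • s) ≤ n := by
  induction n with
  | zero => simp
  | succ n ih =>
    calc G.edist x (x + (n + 1) • s)
        ≤ G.edist x (x + n • s) + G.edist (x + n • s) (x + n • s + s) := by
          rw [succ_nsmul, ← add_assoc]; exact SimpleGraph.edist_triangle
      _ ≤ n + 1 := add_le_add ih (edist_eq_one_iff_adj.2 (hs _)).le
      _ = (n + 1 : ℕ) := by norm_cast

theorem edist_add_zsmul_le (hs : ∀ x, G.Adj x (x + s)) (x : α) (m : ℤ) :
    G.edist x (x + m • s) ≤ m.natAbs := by
  obtain ⟨n, rfl | rfl⟩ := m.eq_nat_or_neg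
  · simpa using edist_add_nsmul_le hs x n
  · rw [edist_comm]
    simpa using edist_add_nsmul_le hs (x + -(n : ℤ) • s) n

end SimpleGraph

namespace distGraph

open SimpleGraph

variable {t : ℤ}

theorem adj_add_one (i : ℤ) : (distGraph {1, t}).Adj i (i + 1) :=
  ⟨by omega, by simp⟩

theorem adj_add_self (ht : 0 < t) (i : ℤ) : (distGraph {1, t}).Adj i (i + t) :=
  ⟨by omega, by simp [abs_of_pos ht]⟩

theorem sub_eq_of_adj {i j : ℤ} (h : (distGraph {1, t}).Adj i j) :
    j - i = 1 ∨ j - i = -1 ∨ j - i = t ∨ j - i = -t := by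
  simp only [distGraph, Set.mem_insert_iff, Set.mem_singleton_iff] at h
  cases abs_cases (i - j) <;> omega

theorem edist_le_natAbs_add_natAbs (ht : 0 < t) {i j a y : ℤ} (h : j - i = a + y * t) :
    (distGraph {1, t}).edist i j ≤ a.natAbs + y.natAbs := by
  obtain rfl : j = i + a • (1 : ℤ) + y • t := by simp; linarith
  calc _ ≤ (distGraph {1, t}).edist i (i + a • 1) +
        (distGraph {1, t}).edist (i + a • 1) (i + a • 1 + y • t) := SimpleGraph.edist_triangle
    _ ≤ a.natAbs + y.natAbs :=
        add_le_add (edist_add_zsmul_le adj_add_one i a) (edist_add_zsmul_le (adj_add_self ht) _ y)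

theorem reachable (ht : 0 < t) (i j : ℤ) : (distGraph {1, t}).Reachable i j :=
  reachable_of_edist_ne_top <| ne_top_of_le_ne_top (by simp)
    (edist_le_natAbs_add_natAbs ht (a := j - i) (y := 0) (by ring))

theorem dist_le_natAbs_add_natAbs (ht : 0 < t) {i j a y : ℤ} (h : j - i = a + y * t) :
    (distGraph {1, t}).dist i j ≤ a.natAbs + y.natAbs := by
  exact_mod_cast (reachable ht i j).coe_dist_eq_edist ▸ edist_le_natAbs_add_natAbs ht h

theorem exists_natAbs_add_natAbs_le_length {i j : ℤ} (p : (distGraph {1, t}).Walk i j) :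
    ∃ a y : ℤ, j - i = a + y * t ∧ a.natAbs + y.natAbs ≤ p.length := by
  induction p with
  | nil => exact ⟨0, 0, by simp⟩
  | cons h p ih =>
    obtain ⟨a, y, hp, hle⟩ := ih
    rw [Walk.length_cons]
    rcases sub_eq_of_adj h with h | h | h | h
    · exact ⟨a + 1, y, by linarith, by omega⟩
    · exact ⟨a - 1, y, by linarith, by omega⟩
    · exact ⟨a, y + 1, by linarith, by omega⟩
    · exact ⟨a, y - 1, by linarith, by omega⟩

theorem exists_natAbs_add_natAbs_le_dist (ht : 0 < t) (i j : ℤ) :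
    ∃ a y : ℤ, j - i = a + y * t ∧ a.natAbs + y.natAbs ≤ (distGraph {1, t}).dist i j := by
  obtain ⟨p, hp⟩ := (reachable ht i j).exists_walk_length_eq_dist
  exact hp ▸ exists_natAbs_add_natAbs_le_length p

end distGraph

theorem min_le_natAbs_add_natAbs {t q r a y : ℤ} (ht : 0 < t) (hq : 0 ≤ q) (hr0 : 0 ≤ r)
    (hrt : r < t) (h : q * t + r = a + y * t) :
    min (q + r) (q + 1 + t - r) ≤ a.natAbs + y.natAbs := by
  rcases le_or_gt y q with hyq | hyq
  · have : q - y ≤ (q - y) * t := le_mul_of_one_le_right (by omega) (by omega)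
    have : a = (q - y) * t + r := by linarith
    omega
  · have : (y - q - 1) * 1 ≤ (y - q - 1) * t := mul_le_mul_of_nonneg_left (by omega) (by omega)
    have : a = r - (y - q) * t := by linarith
    have : (y - q) * t = (y - q - 1) * t + t := by ring
    omega

/-- In `D(1,t)` with `t ≥ 2`, if `|i - j| = q·t + r` with `0 ≤ r < t` (and `q ≥ 0`),
then `d(i,j) = min (q + r) (q + 1 + t - r)`. -/
theorem distGraph_one_t_dist (t : ℤ) (ht : 2 ≤ t) (i j q r : ℤ)
    (hq : 0 ≤ q) (hr0 : 0 ≤ r) (hrt : r < t) (hij : |i - j| = q * t + r) :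
    ((distGraph {1, t}).dist i j : ℤ) = min (q + r) (q + 1 + t - r) := by
  have ht0 : 0 < t := by omega
  wlog hji : j - i = q * t + r generalizing i j
  · rw [SimpleGraph.dist_comm]
    exact this j i (by rwa [abs_sub_comm]) (by cases abs_cases (i - j) <;> omega)
  apply le_antisymm
  · have h₁ := distGraph.dist_le_natAbs_add_natAbs ht0 (i := i) (j := j) (a := r) (y := q)
      (by linarith)
    have h₂ := distGraph.dist_le_natAbs_add_natAbs ht0 (i := i) (j := j) (a := r - t) (y := q + 1)
      (by linarith)
    omega
  · obtain ⟨a, y, hj, hle⟩ := distGraph.exists_natAbs_add_natAbs_le_dist ht0 i j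
    have := min_le_natAbs_add_natAbs ht0 hq hr0 hrt (hji.symm.trans hj)
    omega
end

section
/- Let t ≥ 2 be an integer and let i, j be two vertices of the infinite distance graph D(t-1, t) with |i - j| = q·t + r, where q, r are nonnegative integers and 0 ≤ r < t. Then the graph distance between i and j satisfies d(i,j) ≤ q + t. -/
/-
A walk may use each difference `±(t - 1)` and `±t` any number of times, so `i` is joined to
`i + a (t - 1) + b t` by a walk of length `|a| + |b|`. Writing `q t + r = (q + r) t - r (t - 1)`
gives length `q + 2r`, and `q t + r = (q - (t - r - 1)) t + (t - r) (t - 1)` gives length at most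
`q + 2(t - r) - 1`; the first is `≤ q + t` when `2r ≤ t`, the second when `2r > t`.
-/

namespace distGraph

variable {D : Set ℤ}

theorem adj_add {s : ℤ} (hs : 0 < s) (hsD : s ∈ D) (x : ℤ) : (distGraph D).Adj x (x + s) :=
  ⟨by omega, by rwa [sub_add_cancel_left, abs_neg, abs_of_pos hs]⟩

theorem edist_add_natCast_mul_le {s : ℤ} (hs : 0 < s) (hsD : s ∈ D) (x : ℤ) (n : ℕ) :
    (distGraph D).edist x (x + n * s) ≤ n := by
  induction n with
  | zero => simp
  | succ n ih =>
    calc (distGraph D).edist x (x + ↑(n + 1) * s)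
        ≤ (distGraph D).edist x (x + n * s) + (distGraph D).edist (x + n * s) (x + ↑(n + 1) * s) :=
          SimpleGraph.edist_triangle
      _ ≤ n + 1 := by
          gcongr
          rw [SimpleGraph.edist_le_one_iff_adj_or_eq, show x + ↑(n + 1) * s = x + n * s + s by
            push_cast; ring]
          exact Or.inl (adj_add hs hsD _)

theorem edist_add_mul_le {s : ℤ} (hs : 0 < s) (hsD : s ∈ D) (x a : ℤ) :
    (distGraph D).edist x (x + a * s) ≤ a.natAbs := by
  obtain ⟨n, rfl | rfl⟩ := Int.eq_nat_or_neg a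
  · exact edist_add_natCast_mul_le hs hsD x n
  · rw [SimpleGraph.edist_comm]
    simpa using edist_add_natCast_mul_le hs hsD (x + -n * s) n

theorem dist_le_of_sub_eq {u v : ℤ} (hu : 0 < u) (huD : u ∈ D) (hv : 0 < v) (hvD : v ∈ D)
    {i j a b : ℤ} (h : j - i = a * u + b * v) :
    (distGraph D).dist i j ≤ a.natAbs + b.natAbs := by
  apply ENat.toNat_le_of_le_natCast
  obtain rfl : j = i + a * u + b * v := by linarith
  calc (distGraph D).edist i (i + a * u + b * v)
      ≤ (distGraph D).edist i (i + a * u) + (distGraph D).edist (i + a * u) (i + a * u + b * v) :=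
        SimpleGraph.edist_triangle
    _ ≤ a.natAbs + b.natAbs :=
        add_le_add (edist_add_mul_le hu huD i a) (edist_add_mul_le hv hvD _ b)
    _ = ↑(a.natAbs + b.natAbs) := by norm_cast

theorem dist_le_of_abs_sub_eq {u v : ℤ} (hu : 0 < u) (huD : u ∈ D) (hv : 0 < v) (hvD : v ∈ D)
    {i j a b : ℤ} (h : |i - j| = a * u + b * v) :
    (distGraph D).dist i j ≤ a.natAbs + b.natAbs := by
  rcases abs_cases (i - j) with ⟨hij, -⟩ | ⟨hij, -⟩
  · simpa using dist_le_of_sub_eq (a := -a) (b := -b) hu huD hv hvD (by linarith)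
  · exact dist_le_of_sub_eq hu huD hv hvD (by linarith)

end distGraph

/-- In `D(t-1,t)` with `t ≥ 2`, if `|i - j| = q·t + r` with `q, r ≥ 0` and `r < t`,
then `d(i,j) ≤ q + t`. -/
theorem distGraph_tsub1_t_dist_le (t : ℤ) (ht : 2 ≤ t) (i j q r : ℤ)
    (hq : 0 ≤ q) (hr0 : 0 ≤ r) (hrt : r < t) (hij : |i - j| = q * t + r) :
    ((distGraph {t - 1, t}).dist i j : ℤ) ≤ q + t := by
  have dist_le {a b : ℤ} (hab : q * t + r = a * (t - 1) + b * t) :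
      (distGraph {t - 1, t}).dist i j ≤ a.natAbs + b.natAbs :=
    distGraph.dist_le_of_abs_sub_eq (by omega) (by simp) (by omega) (by simp) (hij.trans hab)
  by_cases hr : 2 * r ≤ t
  · have := dist_le (a := -r) (b := q + r) (by ring)
    omega
  · have := dist_le (a := t - r) (b := q - (t - r - 1)) (by ring)
    omega
end

section
/- For integers i, j with t/2 < j - i ≤ t - 1 in the distance graph D(t-1,t) with t ≥ 2, the graph distance satisfies d(i,j) ≤ 2(t - j + i) + 1 ≤ t. -/
namespace distGraph

variable {D : Set ℤ} {a b : ℤ}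

lemma adj_add_of_abs_mem (ha : |a| ∈ D) (ha0 : a ≠ 0) (i : ℤ) : (distGraph D).Adj i (i + a) :=
  ⟨by simpa using ha0, by simpa using ha⟩

lemma edist_add_natCast_mul_le_s6 (ha : |a| ∈ D) (ha0 : a ≠ 0) (i : ℤ) (n : ℕ) :
    (distGraph D).edist i (i + n * a) ≤ n := by
  induction n with
  | zero => simp
  | succ n ih =>
    have hstep : (distGraph D).edist (i + n * a) (i + n * a + a) = 1 :=
      SimpleGraph.edist_eq_one_iff_adj.mpr (adj_add_of_abs_mem ha ha0 _)
    calc (distGraph D).edist i (i + (n + 1 : ℕ) * a)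
        = (distGraph D).edist i (i + n * a + a) := by rw [Nat.cast_succ, add_one_mul, add_assoc]
      _ ≤ (distGraph D).edist i (i + n * a) + (distGraph D).edist (i + n * a) (i + n * a + a) :=
          SimpleGraph.edist_triangle
      _ ≤ (n + 1 : ℕ) := by rw [hstep]; push_cast; gcongr

lemma edist_add_natCast_mul_add_natCast_mul_le (ha : |a| ∈ D) (ha0 : a ≠ 0) (hb : |b| ∈ D)
    (hb0 : b ≠ 0) (i : ℤ) (m n : ℕ) :
    (distGraph D).edist i (i + m * a + n * b) ≤ m + n :=
  calc (distGraph D).edist i (i + m * a + n * b)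
      ≤ (distGraph D).edist i (i + m * a) + (distGraph D).edist (i + m * a) (i + m * a + n * b) :=
        SimpleGraph.edist_triangle
    _ ≤ m + n := add_le_add (edist_add_natCast_mul_le_s6 ha ha0 i m)
        (edist_add_natCast_mul_le_s6 hb hb0 _ n)

end distGraph

theorem distGraph_tsub1_t_dist_large_general (t : ℤ) (i j : ℤ)
    (h0 : t < 2 * (j - i)) (h1 : j - i ≤ t - 1) :
    ((distGraph {t - 1, t}).dist i j : ℤ) ≤ 2 * (t - j + i) + 1 ∧
      2 * (t - j + i) + 1 ≤ t := by
  obtain ⟨k, hk⟩ : ∃ k : ℕ, t - j + i = k + 1 := ⟨(t - j + i - 1).toNat, by omega⟩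
  have hj : j = i + (k + 1 : ℕ) * (t - 1) + k * (-t) := by push_cast; linear_combination -hk
  have hdist : (distGraph {t - 1, t}).dist i j ≤ (k + 1) + k := by
    rw [hj]
    refine ENat.toNat_le_of_le_natCast ?_
    exact_mod_cast distGraph.edist_add_natCast_mul_add_natCast_mul_le
      (by rw [abs_of_pos (by omega)]; simp) (by omega) (by simp [abs_of_pos (by omega : 0 < t)])
      (by omega) i (k + 1) k
  omega

/-- In `D(t-1,t)` with `t ≥ 2`, if `t/2 < j - i ≤ t - 1` then
`d(i,j) ≤ 2(t - j + i) + 1 ≤ t`. -/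
theorem distGraph_tsub1_t_dist_large (t : ℤ) (ht : 2 ≤ t) (i j : ℤ)
    (h0 : t < 2 * (j - i)) (h1 : j - i ≤ t - 1) :
    ((distGraph {t - 1, t}).dist i j : ℤ) ≤ 2 * (t - j + i) + 1 ∧
      2 * (t - j + i) + 1 ≤ t :=
  distGraph_tsub1_t_dist_large_general t i j h0 h1
end

section
/- For any integer n ≥ 2, the upper traceable number of the path P_n on n vertices equals n²/2 - 1 if n is even, and (n² - 1)/2 - 1 if n is odd. -/
/-- The path graph on vertices `0, 1, …, n-1` (consecutive integers adjacent). -/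
def pathG (n : ℕ) : SimpleGraph (Fin n) where
  Adj i j := i.val + 1 = j.val ∨ j.val + 1 = i.val
  symm := ⟨by intro i j h; (try simp only at *); tauto⟩
  loopless := ⟨by intro i h; (try simp only at *); omega⟩

/-- The sum `d(s) = Σ d(x_i, x_{i+1})` along a linear ordering of the vertices,
given as a list. -/
noncomputable def orderingSum {V : Type*} (G : SimpleGraph V) (l : List V) : ℕ :=
  ((l.zip l.tail).map fun p => G.dist p.1 p.2).sum

/-!
Cut the path between `j` and `j + 1`: the distance `|a - b|` is the number of cuts separating
`a` and `b`, so `d(s) = Σⱼ cⱼ`, where `cⱼ` counts the consecutive pairs of `s` lying on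
opposite sides of cut `j`. Each such pair contains a vertex of either side, a vertex lies in at
most two pairs and an endpoint of `s` in only one; hence `cⱼ ≤ 2 min (j + 1) (n - 1 - j)`,
strictly at a middle cut on the side of an endpoint of `s` (the two endpoints are distinct, so
one of them is not the centre of the path). Summing, `d(s) < Σⱼ 2 min (j + 1) (n - 1 - j)`,
which is `⌊n² / 2⌋`. The ordering `⌊n/2⌋, 0, n - 1, 1, n - 2, …` attains `⌊n² / 2⌋ - 1`:
its steps have lengths `⌊n/2⌋, n - 1, n - 2, …, 2`.
-/

open Finset

namespace List

variable {α : Type*}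

def countChanges (p : α → Bool) : List α → ℕ
  | a :: b :: t => (if p a = p b then 0 else 1) + countChanges p (b :: t)
  | _ => 0

theorem countChanges_not (p : α → Bool) (l : List α) :
    l.countChanges (fun a => !p a) = l.countChanges p := by
  induction l with
  | nil => rfl
  | cons a t ih =>
    cases t with
    | nil => rfl
    | cons b t => simp only [countChanges, Bool.not_inj_iff, ih]

theorem countChanges_add_endpoints_le (p : α → Bool) (l : List α) :
    l.countChanges p + (l.head?.any p).toNat + (l.getLast?.any p).toNat ≤ 2 * l.countP p := by
  induction l with
  | nil => simp [countChanges]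
  | cons a t ih =>
    cases t with
    | nil => cases h : p a <;> simp [countChanges, h]
    | cons b t =>
      simp only [countChanges, head?_cons, getLast?_cons_cons, Option.any_some,
        countP_cons] at ih ⊢
      cases p a <;> cases hb : p b <;> simp [hb] at ih ⊢ <;> omega

theorem countChanges_le_two_mul_countP (p : α → Bool) (l : List α) :
    l.countChanges p ≤ 2 * l.countP p :=
  le_trans (by omega) (countChanges_add_endpoints_le p l)

theorem countChanges_add_one_le_of_endpoint {p : α → Bool} {l : List α} {v : α}
    (hv : v ∈ l.head? ∨ v ∈ l.getLast?) (hpv : p v) :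
    l.countChanges p + 1 ≤ 2 * l.countP p := by
  have := countChanges_add_endpoints_le p l
  rcases hv with hv | hv <;> simp [Option.mem_def.mp hv, hpv] at this <;> omega

theorem Nodup.countP_val_le {n : ℕ} {l : List (Fin n)} (hnd : l.Nodup) (hlen : l.length = n)
    {j : ℕ} (hj : j < n) : l.countP (fun v => decide (v.val ≤ j)) = j + 1 := by
  classical
  have huniv : l.toFinset = univ :=
    eq_univ_of_card _ (by rw [toFinset_card_of_nodup hnd, hlen, Fintype.card_fin])
  have hIic : ({v | v.val ≤ j} : Finset (Fin n)) = Iic ⟨j, hj⟩ := by ext; simp [Fin.le_def]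
  rw [countP_eq_length_filter, ← toFinset_card_of_nodup (hnd.filter _), toFinset_filter, huniv]
  simp [hIic]

theorem Nodup.countP_val_gt {n : ℕ} {l : List (Fin n)} (hnd : l.Nodup) (hlen : l.length = n)
    {j : ℕ} (hj : j < n) : l.countP (fun v => !decide (v.val ≤ j)) = n - 1 - j := by
  have := length_eq_countP_add_countP (fun v : Fin n => decide (v.val ≤ j)) (l := l)
  rw [hnd.countP_val_le hlen hj, hlen] at this
  simp only [decide_not, Bool.decide_eq_true] at this
  omega

end List

theorem Nat.dist_min_eq_sum (a b N : ℕ) :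
    Nat.dist (min a N) (min b N) =
      ∑ j ∈ range N, if decide (a ≤ j) = decide (b ≤ j) then 0 else 1 := by
  induction N with
  | zero => simp
  | succ N ih =>
    rw [sum_range_succ, ← ih]
    unfold Nat.dist
    split_ifs with h <;> simp only [decide_eq_decide] at h <;> omega

theorem sum_range_two_mul_min (N : ℕ) :
    ∑ j ∈ range N, 2 * min (j + 1) (N - j) = (N + 1) ^ 2 / 2 := by
  induction N using Nat.twoStepInduction with
  | zero => simp
  | one => simp
  | more N ih _ =>
    have hshift : ∀ j ∈ range N,
        2 * min (j + 1 + 1) (N + 2 - (j + 1)) = 2 * min (j + 1) (N - j) + 2 := by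
      intro j hj
      rw [mem_range] at hj
      omega
    rw [sum_range_succ', sum_range_succ, sum_congr rfl hshift, sum_add_distrib, ih]
    have : (N + 2 + 1) ^ 2 = (N + 1) ^ 2 + 4 * (N + 2) := by ring
    simp only [sum_const, card_range, smul_eq_mul]
    omega

theorem orderingSum_cons_cons {V : Type*} (G : SimpleGraph V) (a b : V) (t : List V) :
    orderingSum G (a :: b :: t) = G.dist a b + orderingSum G (b :: t) := by
  simp [orderingSum]

theorem orderingSum_map_range {V : Type*} (G : SimpleGraph V) (f : ℕ → V) (N : ℕ) :
    orderingSum G ((List.range (N + 1)).map f) = ∑ i ∈ range N, G.dist (f i) (f (i + 1)) := by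
  induction N generalizing f with
  | zero => simp [orderingSum]
  | succ N ih =>
    rw [List.range_succ_eq_map, List.map_cons, List.map_map, List.range_succ_eq_map,
      List.map_cons, orderingSum_cons_cons, ← List.map_cons, ← List.range_succ_eq_map,
      ih, sum_range_succ']
    simp [add_comm]

section PathDist

variable {n : ℕ}

theorem pathG_dist_le_length {a b : Fin n} (p : (pathG n).Walk a b) :
    Nat.dist a b ≤ p.length := by
  induction p with
  | nil => simp
  | @cons u v w h _ ih =>
    have h' : u.val + 1 = v.val ∨ v.val + 1 = u.val := h
    rw [SimpleGraph.Walk.length_cons]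
    unfold Nat.dist at *
    omega

theorem pathG_exists_walk_length {a b : Fin n} (h : a.val ≤ b.val) :
    ∃ p : (pathG n).Walk a b, p.length = b.val - a.val := by
  obtain ⟨k, hk⟩ := Nat.exists_eq_add_of_le h
  induction k generalizing a with
  | zero =>
    obtain rfl : a = b := Fin.ext (by omega)
    exact ⟨.nil, by simp⟩
  | succ k ih =>
    let a' : Fin n := ⟨a.val + 1, by omega⟩
    obtain ⟨p, hp⟩ := ih (a := a') (by simp [a']; omega) (by simp [a']; omega)
    have hadj : (pathG n).Adj a a' := Or.inl rfl
    exact ⟨.cons hadj p, by rw [SimpleGraph.Walk.length_cons, hp]; dsimp [a']; omega⟩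

theorem pathG_dist (a b : Fin n) : (pathG n).dist a b = Nat.dist a b := by
  wlog h : a.val ≤ b.val generalizing a b
  · rw [SimpleGraph.dist_comm, Nat.dist_comm]
    exact this b a (by omega)
  obtain ⟨p, hp⟩ := pathG_exists_walk_length h
  obtain ⟨q, hq⟩ := p.reachable.exists_walk_length_eq_dist
  have hle := SimpleGraph.dist_le p
  have hge := pathG_dist_le_length q
  rw [Nat.dist_eq_sub_of_le h] at hge ⊢
  omega

theorem pathG_dist_eq_sum (a b : Fin n) :
    (pathG n).dist a b =
      ∑ j ∈ range (n - 1), if decide (a.val ≤ j) = decide (b.val ≤ j) then 0 else 1 := by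
  rw [pathG_dist, ← Nat.dist_min_eq_sum, min_eq_left (by omega), min_eq_left (by omega)]

theorem orderingSum_pathG_eq_sum_countChanges (l : List (Fin n)) :
    orderingSum (pathG n) l =
      ∑ j ∈ range (n - 1), l.countChanges (fun v => decide (v.val ≤ j)) := by
  induction l with
  | nil => simp [orderingSum, List.countChanges]
  | cons a t ih =>
    cases t with
    | nil => simp [orderingSum, List.countChanges]
    | cons b t =>
      rw [orderingSum_cons_cons, ih, pathG_dist_eq_sum, ← sum_add_distrib]
      rfl

end PathDist

section Ordering

variable {n : ℕ} {l : List (Fin n)}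

theorem countChanges_cut_le (hnd : l.Nodup) (hlen : l.length = n) {j : ℕ} (hj : j < n - 1) :
    l.countChanges (fun v => decide (v.val ≤ j)) ≤ 2 * min (j + 1) (n - 1 - j) := by
  have hlow := l.countChanges_le_two_mul_countP (fun v => decide (v.val ≤ j))
  have hhigh := l.countChanges_le_two_mul_countP (fun v => !decide (v.val ≤ j))
  rw [hnd.countP_val_le hlen (by omega)] at hlow
  rw [List.countChanges_not, hnd.countP_val_gt hlen (by omega)] at hhigh
  omega

theorem exists_endpoint_ne_middle (hn : 2 ≤ n) (hnd : l.Nodup) (hlen : l.length = n) :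
    ∃ v, (v ∈ l.head? ∨ v ∈ l.getLast?) ∧ (v.val < n / 2 ∨ (n + 1) / 2 ≤ v.val) := by
  have hne : l[0] ≠ l[l.length - 1] := fun h => by
    have := hnd.getElem_inj_iff.mp h
    omega
  have hhead : l[0] ∈ l.head? := by simp [List.head?_eq_getElem?]
  have hlast : l[l.length - 1] ∈ l.getLast? := by simp [List.getLast?_eq_getElem?]
  by_cases h : (l[0]).val < n / 2 ∨ (n + 1) / 2 ≤ (l[0]).val
  · exact ⟨_, .inl hhead, h⟩
  · refine ⟨_, .inr hlast, ?_⟩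
    have := Fin.val_ne_of_ne hne
    omega

theorem exists_countChanges_cut_lt (hn : 2 ≤ n) (hnd : l.Nodup) (hlen : l.length = n) :
    ∃ j ∈ range (n - 1),
      l.countChanges (fun v => decide (v.val ≤ j)) < 2 * min (j + 1) (n - 1 - j) := by
  obtain ⟨v, hv, hlow | hhigh⟩ := exists_endpoint_ne_middle hn hnd hlen
  · refine ⟨n / 2 - 1, by simp only [mem_range]; omega, ?_⟩
    have := List.countChanges_add_one_le_of_endpoint hv
      (p := fun v => decide (v.val ≤ n / 2 - 1)) (by simp only [decide_eq_true_eq]; omega)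
    rw [hnd.countP_val_le hlen (by omega)] at this
    rw [min_eq_left (by omega)]
    omega
  · refine ⟨(n + 1) / 2 - 1, by simp only [mem_range]; omega, ?_⟩
    have := List.countChanges_add_one_le_of_endpoint hv
      (p := fun v => !decide (v.val ≤ (n + 1) / 2 - 1)) 
      (by simp only [Bool.not_eq_eq_eq_not, Bool.not_true, decide_eq_false_iff_not]; omega)
    rw [List.countChanges_not, hnd.countP_val_gt hlen (by omega)] at this
    rw [min_eq_right (by omega)]
    omega

theorem orderingSum_pathG_lt (hn : 2 ≤ n) (hnd : l.Nodup) (hlen : l.length = n) :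
    orderingSum (pathG n) l < n ^ 2 / 2 := by
  rw [orderingSum_pathG_eq_sum_countChanges]
  calc _ < ∑ j ∈ range (n - 1), 2 * min (j + 1) (n - 1 - j) :=
        sum_lt_sum (fun j hj => countChanges_cut_le hnd hlen (mem_range.mp hj))
          (exists_countChanges_cut_lt hn hnd hlen)
    _ = n ^ 2 / 2 := by rw [sum_range_two_mul_min, Nat.sub_add_cancel (by omega)]

end Ordering

def zigzag (n : ℕ) : ℕ → ℕ
  | 0 => n / 2
  | k + 1 => if k % 2 = 0 then k / 2 else n - 1 - k / 2

section Zigzag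

variable {n : ℕ}

theorem zigzag_lt {i : ℕ} (hi : i < n) : zigzag n i < n := by
  cases i with
  | zero => simp only [zigzag]; omega
  | succ k => simp only [zigzag]; split_ifs <;> omega

theorem zigzag_injOn : Set.InjOn (zigzag n) (Set.Iio n) := by
  intro i hi j hj h
  simp only [Set.mem_Iio] at hi hj
  rcases i with _ | i <;> rcases j with _ | j <;> simp only [zigzag] at h <;>
    (try split_ifs at h) <;> omega

theorem dist_zigzag_zero_one : Nat.dist (zigzag n 0) (zigzag n 1) = n / 2 := by
  simp [zigzag, Nat.dist]

theorem dist_zigzag_succ {k : ℕ} (hk : k + 2 < n) :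
    Nat.dist (zigzag n (k + 1)) (zigzag n (k + 2)) = n - 1 - k := by
  simp only [zigzag, Nat.dist]
  split_ifs <;> omega

end Zigzag

theorem exists_orderingSum_pathG_eq {n : ℕ} (hn : 2 ≤ n) :
    ∃ l : List (Fin n), l.Nodup ∧ l.length = n ∧ orderingSum (pathG n) l = n ^ 2 / 2 - 1 := by
  obtain ⟨N, rfl⟩ : ∃ N, n = N + 2 := ⟨n - 2, by omega⟩
  have hval : ∀ i < N + 2, (Fin.ofNat (N + 2) (zigzag (N + 2) i) : ℕ) = zigzag (N + 2) i :=
    fun i hi => by rw [Fin.val_ofNat, Nat.mod_eq_of_lt (zigzag_lt hi)]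
  refine ⟨(List.range (N + 2)).map fun i => Fin.ofNat (N + 2) (zigzag (N + 2) i), ?_, by simp,
    ?_⟩
  · refine List.Nodup.map_on (fun i hi j hj h => zigzag_injOn (n := N + 2) ?_ ?_ ?_)
      List.nodup_range
    · simpa using hi
    · simpa using hj
    · have := congrArg Fin.val h
      rwa [hval i (List.mem_range.mp hi), hval j (List.mem_range.mp hj)] at this
  have hsteps : ∀ k ∈ range N,
      (pathG (N + 2)).dist (Fin.ofNat (N + 2) (zigzag (N + 2) (k + 1)))
        (Fin.ofNat (N + 2) (zigzag (N + 2) (k + 1 + 1))) = N + 1 - k := by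
    intro k hk
    rw [mem_range] at hk
    rw [pathG_dist, hval _ (by omega), hval _ (by omega), dist_zigzag_succ (by omega)]
    omega
  have hreflect : ∑ k ∈ range N, (N + 1 - k) = ∑ k ∈ range N, (k + 2) := by
    rw [← sum_range_reflect]
    exact sum_congr rfl fun k hk => by rw [mem_range] at hk; omega
  rw [orderingSum_map_range (N := N + 1), sum_range_succ', sum_congr rfl hsteps, pathG_dist,
    hval 0 (by omega), hval 1 (by omega), dist_zigzag_zero_one, hreflect, sum_add_distrib,
    sum_const, card_range, smul_eq_mul]
  have := sum_range_id_mul_two N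
  rcases N with _ | M
  · simp
  · have : (M + 1 + 2) ^ 2 = (M + 1) * M + 5 * (M + 1) + 4 := by ring
    simp only [Nat.add_sub_cancel] at *
    omega

/-- The upper traceable number of the path `P_n`, `n ≥ 2`, equals `n²/2 - 1` if `n` is
even and `(n² - 1)/2 - 1` if `n` is odd. -/
theorem upperTraceable_path (n : ℕ) (hn : 2 ≤ n) :
    IsGreatest {m : ℕ | ∃ l : List (Fin n), l.Nodup ∧ l.length = n ∧ m = orderingSum (pathG n) l}
      (if Even n then n ^ 2 / 2 - 1 else (n ^ 2 - 1) / 2 - 1) := by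
  have hfloor : (if Even n then n ^ 2 / 2 - 1 else (n ^ 2 - 1) / 2 - 1) = n ^ 2 / 2 - 1 := by
    split_ifs with h
    · rfl
    · have : n ^ 2 % 2 = 1 := Nat.odd_iff.mp (Nat.not_even_iff_odd.mp h).pow
      omega
  rw [hfloor]
  obtain ⟨l, hnd, hlen, hsum⟩ := exists_orderingSum_pathG_eq hn
  refine ⟨⟨l, hnd, hlen, hsum.symm⟩, ?_⟩
  rintro m ⟨l, hnd, hlen, rfl⟩
  have := orderingSum_pathG_lt hn hnd hlen
  omega
end

section
/- For any integer k ≥ 1 and any connected graph G of order n, the radio k-labeling number satisfies rl_k(G) ≥ (n-1)(k+1) - t⁺(G). -/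
/-- For `k ≥ 1` and a connected graph `G` of order `n` with upper traceable number `T`,
every radio `k`-labeling of `G` has span at least `(n-1)(k+1) - T`;
that is, `rl_k(G) ≥ (n-1)(k+1) - t⁺(G)`. -/
theorem radio_k_labeling_lower_bound {V : Type*} [Fintype V] (G : SimpleGraph V)
    (hG : G.Connected) (n : ℕ) (hn : Fintype.card V = n) (k : ℕ) (hk : 1 ≤ k) (T : ℕ)
    (hT : IsGreatest
      {m : ℕ | ∃ l : List V, l.Nodup ∧ l.length = n ∧ m = orderingSum G l} T)
    (c : V → ℕ)
    (hc : ∀ x y : V, x ≠ y → (k : ℤ) + 1 - G.dist x y ≤ |(c x : ℤ) - c y|) :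
    ∃ x y : V, ((n : ℤ) - 1) * ((k : ℤ) + 1) - T ≤ (c x : ℤ) - c y := by
  have hne : Nonempty V := hG.nonempty
  have hn1 : 1 ≤ n := hn ▸ Fintype.card_pos
  obtain ⟨m, rfl⟩ : ∃ m, n = m + 1 := ⟨n - 1, (Nat.succ_pred_eq_of_pos hn1).symm⟩
  let e : Fin (m + 1) ≃ V := (Fintype.equivFinOfCardEq hn).symm
  set σ := Tuple.sort (c ∘ e) with hσ
  have hmono : Monotone ((c ∘ e) ∘ σ) := Tuple.monotone_sort _
  set u : ℕ → V := fun i => e (σ ⟨min i m, Nat.lt_succ_of_le (min_le_right _ _)⟩) with hu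
  -- monotonicity of c ∘ u
  have hcu : ∀ i j : ℕ, i ≤ j → c (u i) ≤ c (u j) := by
    intro i j hij
    exact hmono (by simp [Fin.le_def]; omega)
  have hun : ∀ i : ℕ, i < m → u i ≠ u (i + 1) := by
    intro i hi h
    have := σ.injective (e.injective h)
    rw [Fin.mk.injEq] at this
    omega
  set l : List V := List.ofFn (fun i : Fin (m + 1) => u i) with hl
  have hlnd : l.Nodup := by
    rw [hl, List.nodup_ofFn]
    intro a b hab
    have := σ.injective (e.injective hab)
    rw [Fin.mk.injEq] at this
    have ha := a.isLt; have hb := b.isLt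
    exact Fin.ext (by omega)
  have hos : orderingSum G l = ∑ i ∈ Finset.range m, G.dist (u i) (u (i + 1)) := by
    have hz : l.zip l.tail = List.ofFn (fun i : Fin m => (u i, u (i + 1))) := by
      apply List.ext_getElem
      · simp [hl]
      · intro i h1 h2
        simp only [List.length_zip, List.length_ofFn, List.length_tail] at h1
        simp only [List.getElem_zip, List.getElem_tail, hl, List.getElem_ofFn,
          Prod.mk.injEq]
    rw [orderingSum, hz, List.map_ofFn, List.sum_ofFn]
    exact Fin.sum_univ_eq_sum_range (fun i => G.dist (u i) (u (i + 1))) m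
  have hTle : (∑ i ∈ Finset.range m, G.dist (u i) (u (i + 1))) ≤ T := by
    rw [← hos]
    exact hT.2 ⟨l, hlnd, by simp [hl], rfl⟩
  -- key sum bound
  have hkey : ∀ i ∈ Finset.range m,
      (k : ℤ) + 1 - G.dist (u i) (u (i + 1)) ≤ (c (u (i + 1)) : ℤ) - c (u i) := by
    intro i hi
    rw [Finset.mem_range] at hi
    have h1 := hc (u (i + 1)) (u i) (fun h => hun i hi h.symm)
    have h2 : (c (u i) : ℤ) ≤ c (u (i + 1)) := by exact_mod_cast hcu i (i + 1) (by omega)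
    rw [abs_of_nonneg (by omega)] at h1
    rw [G.dist_comm] at h1
    linarith
  have hsum := Finset.sum_le_sum hkey
  rw [Finset.sum_range_sub (fun i => (c (u i) : ℤ))] at hsum
  refine ⟨u m, u 0, ?_⟩
  have hpush : (∑ i ∈ Finset.range m, ((k : ℤ) + 1 - G.dist (u i) (u (i + 1))))
      = m * ((k : ℤ) + 1) - ∑ i ∈ Finset.range m, (G.dist (u i) (u (i + 1)) : ℤ) := by
    rw [Finset.sum_sub_distrib, Finset.sum_const, Finset.card_range]
    push_cast
    ring
  rw [hpush] at hsum
  have hTle' : (∑ i ∈ Finset.range m, (G.dist (u i) (u (i + 1)) : ℤ)) ≤ T := by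
    exact_mod_cast Nat.cast_le.mpr hTle |>.trans_eq (by push_cast; ring)
  push_cast
  have : ((m : ℤ) + 1 - 1) = m := by ring
  linarith
end

section
/- For any positive integers k ≥ 1 and t ≥ 2, the radio k-labeling number of the infinite distance graph D(1,2,...,t) satisfies rl_k(D(1,2,...,t)) ≥ (t/2)k² + 1/2. -/
/-- `c : ℤ → ℕ` is a radio `k`-labeling of the graph `G` on `ℤ`:
`|c(u) - c(v)| ≥ k + 1 - d(u,v)` for all distinct `u, v`. -/
def IsRadioLabeling (G : SimpleGraph ℤ) (k : ℕ) (c : ℤ → ℕ) : Prop :=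
  ∀ x y : ℤ, x ≠ y → (k : ℤ) + 1 - G.dist x y ≤ |(c x : ℤ) - c y|

/-! Order the vertices `0, …, n` of `D(1,…,t)` by label as `p₀, …, pₙ`. Since a walk moves at most
`t` per step, `t · d(x, y) ≤ |x - y| + t - 1`, so the radio condition gives
`t (c pᵢ₊₁ - c pᵢ) ≥ t k + 1 - |pᵢ₊₁ - pᵢ|`. Summing, `t · span ≥ n (t k + 1) - ∑ |pᵢ₊₁ - pᵢ|`, and
a Hamiltonian path through `0, …, n` has length at most `((n + 1)² - 2) / 2`, by
`2 |a - b| ≤ |2a - n| + |2b - n|`. For `n = t k` this reads `2 t · span ≥ t² k² + 1`, and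
integrality gives `2 · span ≥ t k² + 1`. -/

theorem two_mul_abs_sub_le {R : Type*} [Ring R] [LinearOrder R] [IsStrictOrderedRing R]
    (a b N : R) : 2 * |a - b| ≤ |2 * a - N| + |2 * b - N| := by
  have h := abs_sub (2 * a - N) (2 * b - N)
  rwa [sub_sub_sub_cancel_right, ← mul_sub, abs_mul, abs_two] at h

theorem Fin.sum_univ_succ_sub_castSucc {M : Type*} [AddCommGroup M] {n : ℕ}
    (f : Fin (n + 1) → M) : ∑ i : Fin n, (f i.succ - f i.castSucc) = f (Fin.last n) - f 0 := by
  rw [Finset.sum_sub_distrib, sub_eq_sub_iff_add_eq_add, add_comm, ← Fin.sum_univ_succ,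
    Fin.sum_univ_castSucc, add_comm]

theorem two_mul_sum_range_abs_two_mul_sub_le (n : ℕ) :
    2 * ∑ j ∈ Finset.range (n + 1), |2 * (j : ℤ) - n| ≤ ((n : ℤ) + 1) ^ 2 := by
  induction n using Nat.twoStepInduction with
  | zero => norm_num
  | one => norm_num [Finset.sum_range_succ]
  | more n ih _ =>
    have hsplit : ∑ j ∈ Finset.range (n + 2 + 1), |2 * (j : ℤ) - ↑(n + 2)|
        = ∑ j ∈ Finset.range (n + 1), |2 * (j : ℤ) - n| + 2 * ((n : ℤ) + 2) := by
      have hterm (j : ℕ) : |2 * ((j + 1 : ℕ) : ℤ) - ↑(n + 2)| = |2 * (j : ℤ) - n| := by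
        push_cast; ring_nf
      rw [Finset.sum_range_succ', Finset.sum_range_succ]
      simp only [hterm, Nat.cast_zero, mul_zero, zero_sub, abs_neg]
      rw [abs_of_nonneg (by push_cast; omega), abs_of_nonneg (by positivity)]
      push_cast
      ring
    rw [hsplit]
    push_cast
    linarith

theorem Equiv.Perm.two_mul_sum_abs_succ_sub_castSucc_le {n : ℕ} (hn : 0 < n)
    (σ : Equiv.Perm (Fin (n + 1))) :
    2 * ∑ i : Fin n, |((σ i.succ : ℕ) : ℤ) - σ i.castSucc| ≤ ((n : ℤ) + 1) ^ 2 - 2 := by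
  set v : Fin (n + 1) → ℤ := fun j => |2 * ((σ j : ℕ) : ℤ) - n|
  have hv : ∑ j, v j = ∑ j ∈ Finset.range (n + 1), |2 * (j : ℤ) - n| := by
    rw [Equiv.sum_comp σ (fun j => |2 * ((j : ℕ) : ℤ) - n|),
      Fin.sum_univ_eq_sum_range (fun j => |2 * (j : ℤ) - n|)]
  have hends : 2 ≤ v 0 + v (Fin.last n) := by
    have hne : ((σ 0 : ℕ) : ℤ) ≠ σ (Fin.last n) := by
      rw [Ne, Nat.cast_inj, Fin.val_inj, σ.injective.eq_iff, Fin.ext_iff]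
      simp only [Fin.val_zero, Fin.val_last]
      omega
    have := two_mul_abs_sub_le ((σ 0 : ℕ) : ℤ) (σ (Fin.last n)) n
    have := Int.one_le_abs (sub_ne_zero.mpr hne)
    simp only [v]
    omega
  have hpairs : ∑ i : Fin n, (v i.succ + v i.castSucc) = 2 * ∑ j, v j - v 0 - v (Fin.last n) := by
    rw [Finset.sum_add_distrib]
    linarith [Fin.sum_univ_succ v, Fin.sum_univ_castSucc v]
  calc 2 * ∑ i : Fin n, |((σ i.succ : ℕ) : ℤ) - σ i.castSucc|
      = ∑ i : Fin n, 2 * |((σ i.succ : ℕ) : ℤ) - σ i.castSucc| := Finset.mul_sum ..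
    _ ≤ ∑ i : Fin n, (v i.succ + v i.castSucc) :=
      Finset.sum_le_sum fun i _ => two_mul_abs_sub_le _ _ _
    _ ≤ ((n : ℤ) + 1) ^ 2 - 2 := by
      linarith [two_mul_sum_range_abs_two_mul_sub_le n]

theorem distGraph_Icc_adj_iff {t : ℕ} {x y : ℤ} :
    (distGraph (Set.Icc 1 (t : ℤ))).Adj x y ↔ x ≠ y ∧ |x - y| ≤ t :=
  ⟨fun h => ⟨h.1, h.2.2⟩, fun h => ⟨h.1, Int.one_le_abs (sub_ne_zero.mpr h.1), h.2⟩⟩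

theorem distGraph_Icc_exists_walk {t : ℕ} (ht : 0 < t) (m : ℕ) {x y : ℤ}
    (h : |x - y| ≤ t * m) :
    ∃ w : (distGraph (Set.Icc 1 (t : ℤ))).Walk x y, w.length ≤ m := by
  induction m generalizing x with
  | zero =>
    obtain rfl : x = y := by simp only [abs_eq_max_neg] at h; omega
    exact ⟨.nil, le_rfl⟩
  | succ m ih =>
    by_cases hxy : x = y
    · subst hxy; exact ⟨.nil, by simp⟩
    let z := x + max (-(t : ℤ)) (min t (y - x))
    have hz : (distGraph (Set.Icc 1 (t : ℤ))).Adj x z ∧ |z - y| ≤ t * m := by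
      rw [distGraph_Icc_adj_iff]
      have : 0 ≤ (t : ℤ) * m := by positivity
      rw [Nat.cast_succ, mul_add_one] at h
      simp only [z, abs_eq_max_neg] at h ⊢
      omega
    obtain ⟨w, hw⟩ := ih hz.2
    exact ⟨.cons hz.1 w, by simpa using hw⟩

theorem distGraph_Icc_mul_dist_le {t : ℕ} (ht : 0 < t) (x y : ℤ) :
    t * (distGraph (Set.Icc 1 (t : ℤ))).dist x y ≤ |x - y| + t - 1 := by
  set a := (x - y).natAbs
  have ha : (a : ℤ) = |x - y| := Int.natCast_natAbs _
  set m := (a + t - 1) / t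
  have hdiv : t * m + (a + t - 1) % t = a + t - 1 := Nat.div_add_mod _ _
  have hmod : (a + t - 1) % t < t := Nat.mod_lt _ ht
  obtain ⟨w, hw⟩ := distGraph_Icc_exists_walk ht m (x := x) (y := y) <| by
    rw [← ha]; exact_mod_cast (by omega : a ≤ t * m)
  have hdist := Nat.mul_le_mul_left t ((SimpleGraph.dist_le w).trans hw)
  rw [← ha]
  have : t * (distGraph (Set.Icc 1 (t : ℤ))).dist x y + 1 ≤ a + t := by omega
  omega

theorem IsRadioLabeling.distGraph_Icc_le_mul_abs_sub {t k : ℕ} {c : ℤ → ℕ}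
    (hc : IsRadioLabeling (distGraph (Set.Icc 1 (t : ℤ))) k c) (ht : 0 < t) {x y : ℤ}
    (hxy : x ≠ y) : t * (k + 1) - (t - 1) - |x - y| ≤ t * |(c x : ℤ) - c y| :=
  calc (t : ℤ) * (k + 1) - (t - 1) - |x - y|
      ≤ t * (k + 1 - (distGraph (Set.Icc 1 (t : ℤ))).dist x y) := by
        linarith [distGraph_Icc_mul_dist_le ht x y]
    _ ≤ t * |(c x : ℤ) - c y| := mul_le_mul_of_nonneg_left (hc x y hxy) (by positivity)

theorem IsRadioLabeling.distGraph_Icc_exists_span_ge {t k : ℕ} {c : ℤ → ℕ}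
    (hc : IsRadioLabeling (distGraph (Set.Icc 1 (t : ℤ))) k c) (ht : 0 < t) {n : ℕ}
    (hn : 0 < n) :
    ∃ x y : ℤ, 2 * n * (t * k + 1) + 2 - ((n : ℤ) + 1) ^ 2 ≤ 2 * t * ((c x : ℤ) - c y) := by
  set σ := Tuple.sort fun j : Fin (n + 1) => c j
  set p : Fin (n + 1) → ℤ := fun i => ((σ i : ℕ) : ℤ)
  set u : Fin (n + 1) → ℤ := fun i => c (p i)
  have hu : Monotone u := fun _ _ hij =>
    Nat.cast_le.mpr (Tuple.monotone_sort (fun j : Fin (n + 1) => c j) hij)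
  have hstep (i : Fin n) :
      t * (k + 1) - (t - 1) - |p i.succ - p i.castSucc| ≤ t * (u i.succ - u i.castSucc) := by
    have hne : p i.succ ≠ p i.castSucc := by
      simp only [p, Ne, Nat.cast_inj, Fin.val_inj, σ.injective.eq_iff]
      exact Fin.castSucc_lt_succ.ne'
    have := hc.distGraph_Icc_le_mul_abs_sub ht hne
    rwa [abs_of_nonneg (sub_nonneg.mpr (hu (Fin.castSucc_le_succ i)))] at this
  have hsum := Finset.sum_le_sum fun i (_ : i ∈ Finset.univ) => hstep i
  rw [← Finset.mul_sum, Fin.sum_univ_succ_sub_castSucc, Finset.sum_sub_distrib,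
    Finset.sum_const, Finset.card_univ, Fintype.card_fin, nsmul_eq_mul] at hsum
  refine ⟨p (Fin.last n), p 0, ?_⟩
  linarith [σ.two_mul_sum_abs_succ_sub_castSucc_le hn]

/-- For `k ≥ 1` and `t ≥ 2`, `rl_k(D(1,2,…,t)) ≥ (t/2)k² + 1/2`:
every radio `k`-labeling of `D(1,2,…,t)` has span at least `(t/2)k² + 1/2`. -/
theorem radio_lower_D1t (t k : ℕ) (ht : 2 ≤ t) (hk : 1 ≤ k) (c : ℤ → ℕ)
    (hc : IsRadioLabeling (distGraph {d : ℤ | 1 ≤ d ∧ d ≤ (t : ℤ)}) k c) :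
    ∃ x y : ℤ, ((t : ℝ) / 2) * (k : ℝ) ^ 2 + 1 / 2 ≤ (c x : ℝ) - c y := by
  have ht₀ : 0 < t := by omega
  obtain ⟨x, y, hspan⟩ := hc.distGraph_Icc_exists_span_ge ht₀ (Nat.mul_pos ht₀ hk)
  have key : (t : ℤ) * k ^ 2 + 1 ≤ 2 * ((c x : ℤ) - c y) := by
    push_cast at hspan
    by_contra! h
    nlinarith
  refine ⟨x, y, ?_⟩
  have : (t : ℝ) * k ^ 2 + 1 ≤ 2 * ((c x : ℝ) - c y) := by exact_mod_cast key
  linarith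
end

section
/- For any integers t ≥ 3 and k ≥ t, the radio k-labeling number of the infinite distance graph D(t-1,t) satisfies rl_k(D(t-1,t)) ≥ (t/2)k² - (t² - t + 1)k + t³/2 - t² + 3t/2 - 1. -/
namespace SimpleGraph

variable {V : Type*} {G : SimpleGraph V}

lemma edist_add_nsmul_le_s12 [AddMonoid V] {e : V} (he : ∀ x, G.Adj x (x + e)) (x : V) (n : ℕ) :
    G.edist x (x + n • e) ≤ n := by
  induction n with
  | zero => simp
  | succ n ih =>
    calc G.edist x (x + (n + 1) • e)
        ≤ G.edist x (x + n • e) + G.edist (x + n • e) (x + n • e + e) := by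
          rw [succ_nsmul, ← add_assoc]; exact G.edist_triangle
      _ ≤ n + 1 := by
          rw [edist_eq_one_iff_adj.mpr (he _)]; exact add_le_add_left ih 1
      _ = (n + 1 : ℕ) := by norm_cast

lemma edist_add_nsmul_sub_nsmul_le [AddGroup V] {e f : V} (he : ∀ x, G.Adj x (x + e))
    (hf : ∀ x, G.Adj x (x + f)) (x : V) (m n : ℕ) :
    G.edist x (x + m • e - n • f) ≤ (m + n : ℕ) := by
  have hback : G.edist (x + m • e) (x + m • e - n • f) ≤ n := by
    rw [edist_comm]
    simpa using edist_add_nsmul_le_s12 hf (x + m • e - n • f) n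
  calc G.edist x (x + m • e - n • f)
      ≤ G.edist x (x + m • e) + G.edist (x + m • e) (x + m • e - n • f) := G.edist_triangle
    _ ≤ m + n := add_le_add (edist_add_nsmul_le_s12 he x m) hback
    _ = (m + n : ℕ) := by norm_cast

end SimpleGraph

lemma distGraph_adj_add {D : Set ℤ} {e : ℤ} (he0 : 0 < e) (he : e ∈ D) (x : ℤ) :
    (distGraph D).Adj x (x + e) :=
  ⟨by omega, by rwa [sub_add_cancel_left, abs_neg, abs_of_pos he0]⟩

section DistGraphTwoSteps

variable {t : ℕ} (ht : 2 ≤ t)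
include ht

local notation "𝔇" => distGraph {(t : ℤ) - 1, (t : ℤ)}

lemma distGraph_adj_add_sub_one (x : ℤ) : (𝔇).Adj x (x + ((t : ℤ) - 1)) :=
  distGraph_adj_add (by omega) (by simp) x

lemma distGraph_adj_add_self (x : ℤ) : (𝔇).Adj x (x + t) :=
  distGraph_adj_add (by omega) (by simp) x

/-- A residue `r < t` is reached either as `r t - r (t-1)` or as `(t-r)(t-1) - (t-1-r) t`;
the shorter of the two walks has at most `t - 1` edges. -/
lemma distGraph_edist_add_lt_le (x : ℤ) {r : ℕ} (hr : r < t) :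
    (𝔇).edist x (x + r) ≤ (t - 1 : ℕ) := by
  have hsub := SimpleGraph.edist_add_nsmul_sub_nsmul_le (distGraph_adj_add_self ht)
    (distGraph_adj_add_sub_one ht) x r r
  have hsub' := SimpleGraph.edist_add_nsmul_sub_nsmul_le (distGraph_adj_add_sub_one ht)
    (distGraph_adj_add_self ht) x (t - r) (t - 1 - r)
  rcases le_or_gt (2 * r) (t - 1) with hsmall | hlarge
  · have hx : x + r • (t : ℤ) - r • ((t : ℤ) - 1) = x + r := by simp only [nsmul_eq_mul]; ring
    rw [hx] at hsub
    exact hsub.trans (by exact_mod_cast (by omega : r + r ≤ t - 1))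
  · have hx : x + (t - r) • ((t : ℤ) - 1) - (t - 1 - r) • (t : ℤ) = x + r := by
      simp only [nsmul_eq_mul]; push_cast [Nat.cast_sub hr.le, Nat.cast_sub (by omega : r ≤ t - 1),
        Nat.cast_sub (by omega : 1 ≤ t)]; ring
    rw [hx] at hsub'
    exact hsub'.trans (by exact_mod_cast (by omega : t - r + (t - 1 - r) ≤ t - 1))

lemma distGraph_mul_dist_add_le (x : ℤ) (s : ℕ) :
    t * (𝔇).dist x (x + s) ≤ s + t * (t - 1) := by
  have hs : (x : ℤ) + s = x + (s / t) • (t : ℤ) + (s % t : ℕ) := by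
    rw [nsmul_eq_mul, add_assoc, ← Nat.cast_mul, ← Nat.cast_add, Nat.div_add_mod']
  have hedist : (𝔇).edist x (x + s) ≤ (s / t + (t - 1) : ℕ) := by
    rw [hs]
    calc (𝔇).edist x (x + (s / t) • (t : ℤ) + (s % t : ℕ))
        ≤ (𝔇).edist x (x + (s / t) • (t : ℤ))
          + (𝔇).edist (x + (s / t) • (t : ℤ)) (x + (s / t) • (t : ℤ) + (s % t : ℕ)) :=
          (𝔇).edist_triangle
      _ ≤ (s / t : ℕ) + (t - 1 : ℕ) :=
          add_le_add (SimpleGraph.edist_add_nsmul_le_s12 (distGraph_adj_add_self ht) x _)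
            (distGraph_edist_add_lt_le ht _ (Nat.mod_lt s (by omega)))
      _ = (s / t + (t - 1) : ℕ) := by norm_cast
  have hdist : (𝔇).dist x (x + s) ≤ s / t + (t - 1) := ENat.toNat_le_of_le_natCast hedist
  calc t * (𝔇).dist x (x + s) ≤ t * (s / t) + t * (t - 1) := by
        rw [← mul_add]; exact Nat.mul_le_mul_left t hdist
    _ ≤ s + t * (t - 1) := by gcongr; exact Nat.mul_div_le s t

lemma distGraph_mul_dist_le (x y : ℤ) :
    (t : ℤ) * (𝔇).dist x y ≤ |x - y| + t * (t - 1) := by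
  wlog hxy : x ≤ y generalizing x y
  · rw [SimpleGraph.dist_comm, abs_sub_comm]; exact this y x (by omega)
  obtain ⟨s, rfl⟩ : ∃ s : ℕ, y = x + s := ⟨(y - x).toNat, by omega⟩
  have h := distGraph_mul_dist_add_le ht x s
  zify [(by omega : 1 ≤ t)] at h
  rwa [sub_add_cancel_left, abs_neg, Nat.abs_cast]

end DistGraphTwoSteps

section Jumps

open Finset

lemma two_mul_sum_abs_two_mul_add_one_sub_le (n : ℕ) :
    2 * ∑ x ∈ range n, |2 * (x : ℤ) + 1 - n| ≤ n ^ 2 := by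
  induction n using Nat.twoStepInduction with
  | zero => simp
  | one => simp
  | more n ih _ =>
    have hshift : ∑ x ∈ range n, |2 * ((x + 1 : ℕ) : ℤ) + 1 - (n + 2 : ℕ)|
        = ∑ x ∈ range n, |2 * (x : ℤ) + 1 - n| :=
      sum_congr rfl fun x _ => by push_cast; ring_nf
    rw [sum_range_succ, sum_range_succ', hshift]
    have hfirst : |2 * ((0 : ℕ) : ℤ) + 1 - (n + 2 : ℕ)| = n + 1 := by
      rw [abs_of_nonpos (by push_cast; omega)]; push_cast; ring
    have hlast : |2 * ((n + 1 : ℕ) : ℤ) + 1 - (n + 2 : ℕ)| = n + 1 := by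
      rw [abs_of_nonneg (by push_cast; omega)]; push_cast; ring
    rw [hfirst, hlast]
    push_cast
    nlinarith

/-- `2 |a - b| ≤ |2 a - m| + |2 b - m|`: measured from the centre `m / 2`, every point is left
at most once and entered at most once. -/
lemma two_mul_sum_abs_sub_le {m : ℕ} {f : ℕ → ℕ} (hf : ∀ i < m + 1, f i < m + 1)
    (hinj : Set.InjOn f (range (m + 1))) :
    2 * ∑ i ∈ range m, |(f (i + 1) : ℤ) - f i| ≤ (m + 1) ^ 2 := by
  set g : ℕ → ℤ := fun x => |2 * (x : ℤ) + 1 - (m + 1 : ℕ)|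
  have hg : ∀ x, 0 ≤ g x := fun x => abs_nonneg _
  have hjump : ∀ a b : ℕ, 2 * |(a : ℤ) - b| ≤ g a + g b := fun a b => by
    calc 2 * |(a : ℤ) - b| = |(2 * (a : ℤ) + 1 - (m + 1 : ℕ)) - (2 * b + 1 - (m + 1 : ℕ))| := by
          rw [← abs_two, ← abs_mul]; ring_nf
      _ ≤ g a + g b := abs_sub _ _
  have hvisit : ∑ i ∈ range (m + 1), g (f i) ≤ ∑ x ∈ range (m + 1), g x := by
    rw [← sum_image hinj]
    exact sum_le_sum_of_subset_of_nonneg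
      (fun x hx => by obtain ⟨i, hi, rfl⟩ := mem_image.mp hx; simpa using hf i (by simpa using hi))
      (fun x _ _ => hg x)
  have hleave : ∑ i ∈ range m, g (f i) ≤ ∑ i ∈ range (m + 1), g (f i) := by
    rw [sum_range_succ]; linarith [hg (f m)]
  have henter : ∑ i ∈ range m, g (f (i + 1)) ≤ ∑ i ∈ range (m + 1), g (f i) := by
    rw [sum_range_succ']; linarith [hg (f 0)]
  calc 2 * ∑ i ∈ range m, |(f (i + 1) : ℤ) - f i|
      ≤ ∑ i ∈ range m, (g (f (i + 1)) + g (f i)) := by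
        rw [mul_sum]; exact sum_le_sum fun i _ => hjump _ _
    _ ≤ 2 * ∑ x ∈ range (m + 1), g x := by rw [sum_add_distrib]; linarith
    _ ≤ ((m + 1 : ℕ) : ℤ) ^ 2 := two_mul_sum_abs_two_mul_add_one_sub_le (m + 1)
    _ = (m + 1) ^ 2 := by push_cast; ring

end Jumps

lemma exists_injOn_range_monotone {α : Type*} [LinearOrder α] (w : ℕ → α) (m : ℕ) :
    ∃ f : ℕ → ℕ, (∀ i < m + 1, f i < m + 1) ∧ Set.InjOn f (Finset.range (m + 1)) ∧
      ∀ i < m, w (f i) ≤ w (f (i + 1)) := by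
  set σ := Tuple.sort fun i : Fin (m + 1) => w i
  refine ⟨fun i => σ (Fin.ofNat (m + 1) i), fun i _ => (σ _).isLt,
    fun i hi j hj hij => ?_, fun i hi => ?_⟩
  · simp only [Finset.coe_range, Set.mem_Iio] at hi hj
    simpa [Nat.mod_eq_of_lt hi, Nat.mod_eq_of_lt hj] using
      congrArg Fin.val (σ.injective (Fin.val_injective hij))
  · exact Tuple.monotone_sort (fun i : Fin (m + 1) => w i)
      (by rw [Fin.le_iff_val_le_val, Fin.val_ofNat, Fin.val_ofNat, Nat.mod_eq_of_lt,
        Nat.mod_eq_of_lt] <;> omega)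

lemma IsRadioLabeling.sum_sub_dist_le {G : SimpleGraph ℤ} {k : ℕ} {c : ℤ → ℕ}
    (hc : IsRadioLabeling G k c) {p : ℕ → ℤ} {m : ℕ} (hp : ∀ i < m, p (i + 1) ≠ p i)
    (hmono : ∀ i < m, c (p i) ≤ c (p (i + 1))) :
    ∑ i ∈ Finset.range m, ((k : ℤ) + 1 - G.dist (p (i + 1)) (p i)) ≤ c (p m) - c (p 0) := by
  rw [← Finset.sum_range_sub fun i => (c (p i) : ℤ)]
  refine Finset.sum_le_sum fun i hi => ?_
  have hi : i < m := Finset.mem_range.mp hi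
  have := hc _ _ (hp i hi)
  rwa [abs_of_nonneg (sub_nonneg.mpr (by exact_mod_cast hmono i hi))] at this

lemma IsRadioLabeling.exists_distGraph_span_ge {t k : ℕ} (ht : 2 ≤ t) {c : ℤ → ℕ}
    (hc : IsRadioLabeling (distGraph {(t : ℤ) - 1, (t : ℤ)}) k c) (m : ℕ) :
    ∃ x y : ℤ, 2 * m * t * ((k : ℤ) + 2 - t) - (m + 1) ^ 2 ≤ 2 * t * ((c x : ℤ) - c y) := by
  obtain ⟨f, hf, hinj, hmono⟩ := exists_injOn_range_monotone (fun x : ℕ => c x) m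
  set p : ℕ → ℤ := fun i => f i
  have hp : ∀ i < m, p (i + 1) ≠ p i := fun i hi h => by
    have := hinj (Finset.mem_coe.mpr (Finset.mem_range.mpr (by omega)))
      (Finset.mem_coe.mpr (Finset.mem_range.mpr (by omega))) (Nat.cast_injective h)
    omega
  have hlabels := hc.sum_sub_dist_le hp hmono
  have hjumps := two_mul_sum_abs_sub_le hf hinj
  have hgaps : ∀ i ∈ Finset.range m, (t : ℤ) * (k + 2 - t) - |p (i + 1) - p i|
      ≤ t * (k + 1 - (distGraph {(t : ℤ) - 1, (t : ℤ)}).dist (p (i + 1)) (p i)) := fun i _ => by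
    have := distGraph_mul_dist_le ht (p (i + 1)) (p i)
    linarith
  have hsum := Finset.sum_le_sum hgaps
  rw [← Finset.mul_sum, Finset.sum_sub_distrib, Finset.sum_const, Finset.card_range,
    nsmul_eq_mul] at hsum
  refine ⟨p m, p 0, ?_⟩
  nlinarith [mul_le_mul_of_nonneg_left hlabels (by positivity : (0 : ℤ) ≤ t)]

/-- For `t ≥ 3` and `k ≥ t`,
`rl_k(D(t-1,t)) ≥ (t/2)k² - (t² - t + 1)k + t³/2 - t² + 3t/2 - 1`. -/
theorem radio_lower_Dtsub1t (t k : ℕ) (ht : 3 ≤ t) (hk : t ≤ k) (c : ℤ → ℕ)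
    (hc : IsRadioLabeling (distGraph {(t : ℤ) - 1, (t : ℤ)}) k c) :
    ∃ x y : ℤ,
      ((t : ℝ) / 2) * (k : ℝ) ^ 2 - ((t : ℝ) ^ 2 - t + 1) * k
        + (t : ℝ) ^ 3 / 2 - (t : ℝ) ^ 2 + 3 * (t : ℝ) / 2 - 1
      ≤ (c x : ℝ) - c y := by
  set L : ℤ := k + 1 - t
  have hL : 1 ≤ L := by omega
  obtain ⟨x, y, hspan⟩ := hc.exists_distGraph_span_ge (by omega) (t * (k + 1 - t) - 1)
  refine ⟨x, y, ?_⟩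
  have hm : (((t * (k + 1 - t) - 1 : ℕ) : ℤ)) = t * L - 1 := by
    have : 1 ≤ t * (k + 1 - t) := Nat.mul_pos (by omega) (by omega)
    push_cast [this, Nat.cast_sub (by omega : t ≤ k + 1)]; ring
  rw [hm] at hspan
  have ht0 : (0 : ℤ) < t := by omega
  have hZ : t * L ^ 2 - 2 * L ≤ 2 * ((c x : ℤ) - c y) := by
    refine le_of_mul_le_mul_left ?_ ht0
    nlinarith [mul_nonneg ht0.le (by nlinarith : (0 : ℤ) ≤ t * L - 1)]
  have hR : ((t * L ^ 2 - 2 * L : ℤ) : ℝ) ≤ ((2 * ((c x : ℤ) - c y) : ℤ) : ℝ) :=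
    Int.cast_le.mpr hZ
  push_cast [L] at hR
  linarith
end

section
/- Let t ≥ 2 be an integer and k an even positive integer. Then the radio k-labeling number of the infinite distance graph D(1,2,...,t) satisfies rl_k(D(1,2,...,t)) ≤ (t/2)k² + k. -/
section DistGraph

variable {D : Set ℤ}

lemma distGraph_adj_add_one (h1 : 1 ∈ D) (x : ℤ) : (distGraph D).Adj x (x + 1) :=
  ⟨by omega, by simpa using h1⟩

lemma distGraph_reachable (h1 : 1 ∈ D) (x y : ℤ) : (distGraph D).Reachable x y := by
  wlog h : x ≤ y generalizing x y
  · exact (this y x (by omega)).symm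
  induction y, h using Int.leInduction with
  | base => rfl
  | succ y _ ih => exact ih.trans (distGraph_adj_add_one h1 y).reachable

lemma abs_sub_le_mul_length {t : ℤ} (hD : ∀ d ∈ D, d ≤ t) {x y : ℤ}
    (w : (distGraph D).Walk x y) : |x - y| ≤ t * w.length := by
  induction w with
  | nil => simp
  | @cons a b c hab _ ih =>
    have hstep : |a - b| ≤ t := hD _ hab.2
    calc |a - c| ≤ |a - b| + |b - c| := abs_sub_le a b c
      _ ≤ t * (_ + 1 : ℕ) := by push_cast; linarith

lemma abs_sub_le_mul_dist {t : ℤ} (hD : ∀ d ∈ D, d ≤ t) (h1 : 1 ∈ D) (x y : ℤ) :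
    |x - y| ≤ t * (distGraph D).dist x y := by
  obtain ⟨w, hw⟩ := (distGraph_reachable h1 x y).exists_walk_length_eq_dist
  simpa [hw] using abs_sub_le_mul_length hD w

lemma isRadioLabeling_of_mul_sub_lt {t : ℤ} (hD : ∀ d ∈ D, d ≤ t) (h1 : 1 ∈ D) {k : ℕ}
    {c : ℤ → ℕ} (hc : ∀ x y, x ≠ y → t * (k - |(c x : ℤ) - c y|) < |x - y|) :
    IsRadioLabeling (distGraph D) k c := by
  intro x y hxy
  have ht : 0 ≤ t := le_trans zero_le_one (hD 1 h1)
  have := lt_of_mul_lt_mul_left ((hc x y hxy).trans_le (abs_sub_le_mul_dist hD h1 x y)) ht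
  linarith

end DistGraph

section DoublingResidue

variable {n : ℕ} {x y : ℤ}

lemma two_le_abs_two_mul_emod_sub (hxy : x ≠ y) (hclose : |x - y| ≤ n) :
    2 ≤ |2 * x % (2 * n + 3) - 2 * y % (2 * n + 3)| := by
  set P : ℤ := 2 * n + 3
  have hdecomp : 2 * x % P - 2 * y % P = 2 * (x - y) - P * (2 * x / P - 2 * y / P) := by
    linear_combination Int.emod_add_mul_ediv (2 * x) P - Int.emod_add_mul_ediv (2 * y) P
  rw [hdecomp]
  set q := 2 * x / P - 2 * y / P
  rcases lt_trichotomy q 0 with hq | hq | hq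
  · have : P * q ≤ -P := by nlinarith
    rw [abs_le] at hclose
    rw [le_abs]; left; linarith
  · rw [hq, mul_zero, sub_zero, abs_mul]
    have : 1 ≤ |x - y| := Int.one_le_abs (sub_ne_zero.mpr hxy)
    norm_num; linarith
  · have : P ≤ P * q := by nlinarith
    rw [abs_le] at hclose
    rw [le_abs]; right; linarith

lemma le_abs_sub_of_two_mul_emod_eq (hxy : x ≠ y)
    (h : 2 * x % (2 * n + 3) = 2 * y % (2 * n + 3)) :
    2 * n + 3 ≤ |x - y| := by
  have hcop : IsCoprime (2 * n + 3 : ℤ) 2 := ⟨1, -(n + 1), by ring⟩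
  have hdvd : (2 * n + 3 : ℤ) ∣ x - y :=
    hcop.dvd_of_dvd_mul_left (by rw [mul_sub]; exact Int.ModEq.dvd h.symm)
  exact Int.le_of_dvd (abs_pos.mpr (sub_ne_zero.mpr hxy)) ((dvd_abs _ _).mpr hdvd)

lemma mul_two_sub_abs_two_mul_emod_sub_lt (hxy : x ≠ y) :
    n * (2 - |2 * x % (2 * n + 3) - 2 * y % (2 * n + 3)|) < |x - y| := by
  by_cases hclose : |x - y| ≤ n
  · have := two_le_abs_two_mul_emod_sub hxy hclose
    have : 0 < |x - y| := abs_pos.mpr (sub_ne_zero.mpr hxy)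
    nlinarith
  rcases eq_or_ne (2 * x % (2 * n + 3)) (2 * y % (2 * n + 3)) with heq | hne
  · rw [heq, sub_self, abs_zero]
    linarith [le_abs_sub_of_two_mul_emod_eq hxy heq]
  · have := Int.one_le_abs (sub_ne_zero.mpr hne)
    nlinarith

end DoublingResidue

/-- With `k = 2m` and `n = tm` this is the paper's labeling of period `tk + 3`: since `2` is
inverse to `n + 2` modulo `2n + 3`, the residues `0, …, n + 1` get `0, k, …, (n + 1)k` and the
residues `n + 2, …, 2n + 2` get `m, m + k, …, m + nk`. -/
def doublingLabel (m n : ℕ) (x : ℤ) : ℕ := m * Int.natMod (2 * x) (2 * n + 3)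

section DoublingLabel

variable {m n : ℕ}

lemma natCast_doublingLabel (x : ℤ) :
    (doublingLabel m n x : ℤ) = m * (2 * x % (2 * n + 3)) := by
  rw [doublingLabel, Int.natMod, Nat.cast_mul, Int.toNat_of_nonneg (Int.emod_nonneg _ (by omega))]

lemma doublingLabel_le (x : ℤ) : doublingLabel m n x ≤ m * (2 * n + 2) := by
  have := Int.emod_lt_of_pos (2 * x) (by omega : (0 : ℤ) < 2 * n + 3)
  have : (doublingLabel m n x : ℤ) ≤ m * (2 * n + 2) := by
    rw [natCast_doublingLabel]; gcongr; omega
  exact_mod_cast this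

lemma isRadioLabeling_doublingLabel {t : ℕ} (ht : 1 ≤ t) :
    IsRadioLabeling (distGraph {d : ℤ | 1 ≤ d ∧ d ≤ (t : ℤ)}) (2 * m)
      (doublingLabel m (t * m)) := by
  refine isRadioLabeling_of_mul_sub_lt (t := t) (D := {d : ℤ | 1 ≤ d ∧ d ≤ (t : ℤ)})
    (fun d hd => hd.2) ⟨le_rfl, by exact_mod_cast ht⟩ ?_
  intro x y hxy
  rw [natCast_doublingLabel, natCast_doublingLabel, ← mul_sub, abs_mul, Nat.abs_cast]
  convert mul_two_sub_abs_two_mul_emod_sub_lt (n := t * m) hxy using 1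
  push_cast; ring

end DoublingLabel

theorem radio_upper_D1t_even_general (t k : ℕ) (ht : 2 ≤ t) (hke : Even k) :
    ∃ c : ℤ → ℕ, IsRadioLabeling (distGraph {d : ℤ | 1 ≤ d ∧ d ≤ (t : ℤ)}) k c ∧
      ∀ x : ℤ, (c x : ℝ) ≤ ((t : ℝ) / 2) * (k : ℝ) ^ 2 + k := by
  obtain ⟨m, rfl⟩ := hke
  refine ⟨doublingLabel m (t * m), ?_, fun x => ?_⟩
  · rw [← two_mul]
    exact isRadioLabeling_doublingLabel (by omega)
  · calc (doublingLabel m (t * m) x : ℝ) ≤ (m * (2 * (t * m) + 2) : ℕ) := by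
          exact_mod_cast doublingLabel_le x
      _ = (t / 2) * ((m + m : ℕ) : ℝ) ^ 2 + (m + m : ℕ) := by push_cast; ring

/-- For `t ≥ 2` and even `k ≥ 1`, `rl_k(D(1,2,…,t)) ≤ (t/2)k² + k`: there is a radio
`k`-labeling of `D(1,2,…,t)` with all labels at most `(t/2)k² + k`. -/
theorem radio_upper_D1t_even (t k : ℕ) (ht : 2 ≤ t) (hk : 1 ≤ k) (hke : Even k) :
    ∃ c : ℤ → ℕ, IsRadioLabeling (distGraph {d : ℤ | 1 ≤ d ∧ d ≤ (t : ℤ)}) k c ∧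
      ∀ x : ℤ, (c x : ℝ) ≤ ((t : ℝ) / 2) * (k : ℝ) ^ 2 + k :=
  radio_upper_D1t_even_general t k ht hke
end
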